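/- arXiv:1503.06750 — 2 statements merged into one kernel-verified Lean document; each statement's English description precedes it below -/
import Mathlib

section
/- Let X be a compact subset of ℂ with 0 ∉ X. If the set of polynomial functions p(x) is dense in C(X) (continuous complex-valued functions on X with the sup norm), then the set of functions of the form p(1/x), where p is a polynomial, is also dense in C(X). -/
/-!
Let `u = x⁻¹` and let `B` be the closure of the polynomials in `u`. It suffices to show that `u` is
invertible in `B`: then `x = u⁻¹ ∈ B`, so `B` contains the polynomials in `x`, which are dense.
The spectrum of `u` in `C(X)` is `X⁻¹`, and passing to the closed subalgebra `B` can only add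
bounded components of its complement, so it is enough that `0` lies in an unbounded component of
`ℂ \ X⁻¹`. Density of the polynomials makes `X` polynomially convex: for `z₀ ∉ X`, approximating
`(x - z₀)⁻¹` gives polynomials equal to `1` at `z₀` and small on `X`. By the maximum modulus
principle every component of `ℂ \ (X ∪ {0})` is therefore unbounded, and inverting the component
of a small `z` connects the large point `z⁻¹` to `0` inside `ℂ \ X⁻¹`.
-/

open Polynomial Set Bornology

theorem IsOpen.frontier_connectedComponentIn_subset {α : Type*} [TopologicalSpace α]
    [LocallyConnectedSpace α] {F : Set α} (hF : IsOpen F) (x : α) :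
    frontier (connectedComponentIn F x) ⊆ Fᶜ := by
  intro z hz hzF
  have hcomp : connectedComponentIn F z = connectedComponentIn F x := by
    obtain ⟨y, hyz, hyx⟩ := mem_closure_iff.mp (frontier_subset_closure hz) _
      (hF.connectedComponentIn (x := z)) (mem_connectedComponentIn hzF)
    exact (connectedComponentIn_eq hyz).trans (connectedComponentIn_eq hyx).symm
  rw [hF.connectedComponentIn.frontier_eq] at hz
  exact hz.2 (hcomp ▸ mem_connectedComponentIn hzF)

theorem Subalgebra.isUnit_of_not_isBounded_connectedComponentIn {𝕜 A : Type*} [NormedField 𝕜]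
    [NormedRing A] [NormedAlgebra 𝕜 A] [CompleteSpace A] (S : Subalgebra 𝕜 A)
    (hS : IsClosed (S : Set A)) (x : S)
    (h : ¬ IsBounded (connectedComponentIn (spectrum 𝕜 (x : A))ᶜ 0)) : IsUnit x := by
  have : IsClosed (S : Set A) := hS
  rw [← spectrum.zero_notMem_iff 𝕜]
  exact fun h0 => h (Subalgebra.spectrum_isBounded_connectedComponentIn S x h0)

theorem ContinuousMap.setOf_forall_eq_eval_eq_adjoin {α R : Type*} [TopologicalSpace α]
    [CommSemiring R] [TopologicalSpace R] [IsTopologicalSemiring R] (g : C(α, R)) :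
    {f : C(α, R) | ∃ p : R[X], ∀ x, f x = p.eval (g x)} = Algebra.adjoin R {g} := by
  ext f
  simp only [mem_ofPred_eq, SetLike.mem_coe, Algebra.adjoin_singleton_eq_range_aeval,
    AlgHom.mem_range]
  constructor
  · rintro ⟨p, hp⟩
    exact ⟨p, ContinuousMap.ext fun x => by simp [hp]⟩
  · rintro ⟨p, rfl⟩
    exact ⟨p, fun x => aeval_continuousMap_apply p g x⟩

theorem exists_eval_eq_one_norm_eval_le {X : Set ℂ} [CompactSpace X]
    (hdense : Dense {f : C(X, ℂ) | ∃ p : ℂ[X], ∀ x : X, f x = p.eval (x : ℂ)})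
    {z₀ : ℂ} (hz₀ : z₀ ∉ X) {δ : ℝ} (hδ : 0 < δ) :
    ∃ P : ℂ[X], P.eval z₀ = 1 ∧ ∀ x ∈ X, ‖P.eval x‖ ≤ δ := by
  have hne : ∀ x : X, (x : ℂ) - z₀ ≠ 0 := fun x h => hz₀ (sub_eq_zero.mp h ▸ x.2)
  let d : C(X, ℂ) := ⟨fun x => (x : ℂ) - z₀, by fun_prop⟩
  let g : C(X, ℂ) := ⟨fun x => ((x : ℂ) - z₀)⁻¹, by fun_prop (disch := exact hne)⟩
  obtain ⟨f, ⟨p, hp⟩, hfg⟩ :=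
    Metric.mem_closure_iff.mp (hdense g) (δ / (‖d‖ + 1)) (by positivity)
  refine ⟨1 - (Polynomial.X - C z₀) * p, by simp, fun x hx => ?_⟩
  have hgx : ‖((x - z₀)⁻¹ - p.eval x)‖ ≤ δ / (‖d‖ + 1) := by
    rw [← hp ⟨x, hx⟩, ← dist_eq_norm]
    exact ((g.dist_apply_le_dist ⟨x, hx⟩).trans_lt hfg).le
  have hdx : ‖x - z₀‖ ≤ ‖d‖ := d.norm_coe_le_norm ⟨x, hx⟩
  calc ‖(1 - (Polynomial.X - C z₀) * p).eval x‖ = ‖x - z₀‖ * ‖(x - z₀)⁻¹ - p.eval x‖ := by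
        rw [← norm_mul, mul_sub, mul_inv_cancel₀ (hne ⟨x, hx⟩)]
        simp
    _ ≤ ‖d‖ * (δ / (‖d‖ + 1)) := by gcongr
    _ ≤ δ := by
        rw [mul_div_assoc']
        exact div_le_of_le_mul₀ (by positivity) hδ.le (by nlinarith [norm_nonneg d])

theorem not_isBounded_connectedComponentIn_compl_insert_zero {X : Set ℂ} [CompactSpace X]
    (hdense : Dense {f : C(X, ℂ) | ∃ p : ℂ[X], ∀ x : X, f x = p.eval (x : ℂ)})
    {z₀ : ℂ} (hz₀ : z₀ ∉ insert 0 X) :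
    ¬ IsBounded (connectedComponentIn (insert 0 X)ᶜ z₀) := by
  intro hbdd
  obtain ⟨hz₀0, hz₀X⟩ := not_or.mp hz₀
  have hW : IsOpen (insert 0 X)ᶜ :=
    ((isCompact_iff_compactSpace.mpr ‹_›).insert 0).isClosed.isOpen_compl
  let v : C(X, ℂ) := ⟨Subtype.val, continuous_subtype_val⟩
  have hz₀pos : 0 < ‖z₀‖ := norm_pos_iff.mpr hz₀0
  -- the factor `X` makes the bound hold at `0` too, which may lie on the frontier
  obtain ⟨P, hPz₀, hPX⟩ :=
    exists_eval_eq_one_norm_eval_le hdense hz₀X (δ := ‖z₀‖ / (2 * (‖v‖ + 1))) (by positivity)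
  have hfrontier : ∀ z ∈ frontier (connectedComponentIn (insert 0 X)ᶜ z₀),
      ‖(Polynomial.X * P).eval z‖ ≤ ‖z₀‖ / 2 := by
    intro z hz
    rcases not_notMem.mp (hW.frontier_connectedComponentIn_subset z₀ hz) with rfl | hzX
    · simp only [eval_mul, eval_X, zero_mul, norm_zero]; positivity
    · have hzv : ‖z‖ ≤ ‖v‖ := v.norm_coe_le_norm ⟨z, hzX⟩
      calc ‖(Polynomial.X * P).eval z‖ = ‖z‖ * ‖P.eval z‖ := by simp
        _ ≤ (‖v‖ + 1) * (‖z₀‖ / (2 * (‖v‖ + 1))) := by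
            gcongr
            · linarith
            · exact hPX z hzX
        _ = ‖z₀‖ / 2 := by field_simp
  have := Complex.norm_le_of_forall_mem_frontier_norm_le hbdd
    (Polynomial.X * P).differentiable.diffContOnCl hfrontier
    (subset_closure (mem_connectedComponentIn hz₀))
  simp only [eval_mul, eval_X, hPz₀, mul_one] at this
  linarith

theorem inv_mem_connectedComponentIn_compl_image_inv {X : Set ℂ} [CompactSpace X]
    (h0 : (0 : ℂ) ∉ X)
    (hdense : Dense {f : C(X, ℂ) | ∃ p : ℂ[X], ∀ x : X, f x = p.eval (x : ℂ)})
    {z : ℂ} (hz : z ∉ insert 0 X) :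
    z⁻¹ ∈ connectedComponentIn (Inv.inv '' X)ᶜ 0 := by
  set Ω := connectedComponentIn (insert 0 X)ᶜ z
  have hΩ : Ω ⊆ (insert 0 X)ᶜ := connectedComponentIn_subset _ _
  have hS : IsPreconnected (Inv.inv '' Ω) := isPreconnected_connectedComponentIn.image _ <|
    continuousOn_inv₀.mono fun ω hω h => hΩ hω (Or.inl h)
  have h0S : (0 : ℂ) ∈ closure (Inv.inv '' Ω) := by
    refine Metric.mem_closure_iff.mpr fun ε hε => ?_
    obtain ⟨ω, hωΩ, hω⟩ : ∃ ω ∈ Ω, ε⁻¹ < ‖ω‖ := by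
      by_contra! h
      exact not_isBounded_connectedComponentIn_compl_insert_zero hdense hz
        (isBounded_iff_forall_norm_le.mpr ⟨ε⁻¹, h⟩)
    refine ⟨ω⁻¹, mem_image_of_mem _ hωΩ, ?_⟩
    rw [dist_zero_left, norm_inv]
    exact inv_lt_of_inv_lt₀ hε hω
  have hsub : insert 0 (Inv.inv '' Ω) ⊆ (Inv.inv '' X)ᶜ := by
    rintro _ (rfl | ⟨ω, hωΩ, rfl⟩) ⟨x, hx, hxω⟩
    · exact h0 (inv_eq_zero.mp hxω ▸ hx)
    · exact hΩ hωΩ (Or.inr (inv_injective hxω ▸ hx))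
  have hconn : IsPreconnected (insert 0 (Inv.inv '' Ω)) :=
    hS.subset_closure (subset_insert _ _) (insert_subset h0S subset_closure)
  exact hconn.subset_connectedComponentIn (mem_insert 0 _) hsub
    (mem_insert_of_mem _ ⟨z, mem_connectedComponentIn hz, rfl⟩)

theorem not_isBounded_connectedComponentIn_compl_image_inv {X : Set ℂ} [CompactSpace X]
    (h0 : (0 : ℂ) ∉ X)
    (hdense : Dense {f : C(X, ℂ) | ∃ p : ℂ[X], ∀ x : X, f x = p.eval (x : ℂ)}) :
    ¬ IsBounded (connectedComponentIn (Inv.inv '' X)ᶜ 0) := by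
  obtain ⟨r, hr, hrX⟩ := Metric.isOpen_iff.mp
    (isCompact_iff_compactSpace.mpr ‹_›).isClosed.isOpen_compl 0 h0
  intro hbdd
  refine NormedSpace.unbounded_univ ℂ ℂ <|
    (hbdd.union (Metric.isBounded_closedBall (x := 0) (r := r⁻¹))).subset fun w _ => ?_
  by_cases hw : ‖w‖ ≤ r⁻¹
  · exact Or.inr (mem_closedBall_zero_iff.mpr hw)
  · have hw0 : w ≠ 0 := by rintro rfl; exact hw (by simp [hr.le])
    have hwr : ‖w⁻¹‖ < r := by
      rw [norm_inv]; exact inv_lt_of_inv_lt₀ hr (not_le.mp hw)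
    refine Or.inl (inv_inv w ▸ inv_mem_connectedComponentIn_compl_image_inv h0 hdense ?_)
    rintro (h | h)
    · exact hw0 (inv_eq_zero.mp h)
    · exact hrX (mem_ball_zero_iff.mpr hwr) h

/-- Let `X` be a compact subset of `ℂ` with `0 ∉ X`.  If the polynomial
functions are dense in `C(X, ℂ)`, then the functions `x ↦ p(x⁻¹)` (`p` a polynomial)
are also dense in `C(X, ℂ)`. -/
theorem stmt_0 (X : Set ℂ) [CompactSpace X] (h0 : (0 : ℂ) ∉ X)
    (hdense : Dense {f : C(X, ℂ) | ∃ p : Polynomial ℂ, ∀ x : X, f x = p.eval (x : ℂ)}) :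
    Dense {f : C(X, ℂ) | ∃ p : Polynomial ℂ, ∀ x : X, f x = p.eval ((x : ℂ)⁻¹)} := by
  have hX : ∀ x : X, (x : ℂ) ≠ 0 := fun x hx => h0 (hx ▸ x.2)
  let u : C(X, ℂ) := ⟨fun x => (x : ℂ)⁻¹, by fun_prop (disch := exact hX)⟩
  let v : C(X, ℂ) := ⟨Subtype.val, continuous_subtype_val⟩
  let B := (Algebra.adjoin ℂ {u}).topologicalClosure
  have huB : u ∈ B := Subalgebra.le_topologicalClosure _ (Algebra.self_mem_adjoin_singleton ℂ u)
  have hunit : IsUnit (⟨u, huB⟩ : B) := by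
    refine B.isUnit_of_not_isBounded_connectedComponentIn
      (Subalgebra.isClosed_topologicalClosure _) _ ?_
    rw [ContinuousMap.spectrum_eq_range, show range u = Inv.inv '' X from
      (image_eq_range Inv.inv X).symm]
    exact not_isBounded_connectedComponentIn_compl_image_inv h0 hdense
  obtain ⟨b, hb⟩ := hunit.exists_right_inv
  have hvb : v = b := ContinuousMap.ext fun x =>
    (inv_mul_eq_one₀ (hX x)).mp (by simpa [u] using congr((($hb : B) : C(X, ℂ)) x))
  have hadj : (Algebra.adjoin ℂ {v} : Set C(X, ℂ)) ⊆ closure (Algebra.adjoin ℂ {u}) := by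
    rw [← Subalgebra.topologicalClosure_coe]
    exact Algebra.adjoin_le (singleton_subset_iff.mpr (hvb ▸ b.2))
  have hdense' : Dense (Algebra.adjoin ℂ {v} : Set C(X, ℂ)) :=
    ContinuousMap.setOf_forall_eq_eval_eq_adjoin v ▸ hdense
  show Dense {f : C(X, ℂ) | ∃ p : ℂ[X], ∀ x, f x = p.eval (u x)}
  rw [ContinuousMap.setOf_forall_eq_eval_eq_adjoin u]
  exact dense_closure.mp (hdense'.mono hadj)
end

section
/- Let T be the backward shift on ℓ²(ℕ). Then λI + T is hypercyclic if and only if the open disc of radius 1 centered at λ intersects the unit circle, i.e. if and only if 0 < |λ| < 2; that is, the set of λ for which λI + T is hypercyclic is S_H(T) = 2𝔻 \ {0}. -/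
open Filter Topology ENNReal

set_option linter.unusedSectionVars false

namespace Stmt9Aux

variable {H : Type*} [NormedAddCommGroup H] [InnerProductSpace ℂ H] [CompleteSpace H]

local notation "⟪" x ", " y "⟫" => @inner ℂ _ _ x y

theorem summable_pow_sq {w : ℂ} (hw : ‖w‖ < 1) :
    Summable fun n : ℕ => ‖w ^ n‖ ^ (2 : ℝ≥0∞).toReal := by
  have h : Summable fun n : ℕ => (‖w‖ ^ 2) ^ n :=
    summable_geometric_of_lt_one (by positivity) (by nlinarith [norm_nonneg w])
  refine h.congr fun n => ?_
  rw [norm_pow]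
  rw [show ((2 : ℝ≥0∞).toReal) = ((2 : ℕ) : ℝ) by simp]
  rw [Real.rpow_natCast]
  ring

noncomputable def kvec (e : HilbertBasis ℕ ℂ H) (w : ℂ) : H :=
  if hw : ‖w‖ < 1 then e.repr.symm ⟨fun n => w ^ n, memℓp_gen (summable_pow_sq hw)⟩ else 0

theorem repr_kvec (e : HilbertBasis ℕ ℂ H) {w : ℂ} (hw : ‖w‖ < 1) (n : ℕ) :
    e.repr (kvec e w) n = w ^ n := by
  rw [kvec, dif_pos hw, LinearIsometryEquiv.apply_symm_apply]

theorem ext_repr (e : HilbertBasis ℕ ℂ H) {x y : H}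
    (h : ∀ n, e.repr x n = e.repr y n) : x = y := by
  have : e.repr x = e.repr y := by
    ext n; exact h n
  exact e.repr.injective this


variable (e : HilbertBasis ℕ ℂ H) (T : H →L[ℂ] H)
  (hT : ∀ (x : H) (n : ℕ), e.repr (T x) n = e.repr x (n + 1)) (lam : ℂ)

include hT

theorem apply_kvec {w : ℂ} (hw : ‖w‖ < 1) :
    (lam • (1 : H →L[ℂ] H) + T) (kvec e w) = (lam + w) • kvec e w := by
  apply ext_repr e
  intro n
  have h1 : (lam • (1 : H →L[ℂ] H) + T) (kvec e w) = lam • kvec e w + T (kvec e w) := by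
    simp
  rw [h1, map_add, map_smul]
  simp only [lp.coeFn_add, lp.coeFn_smul, Pi.add_apply, Pi.smul_apply, hT, repr_kvec e hw,
    map_smul, smul_eq_mul]
  ring

theorem pow_apply_kvec {w : ℂ} (hw : ‖w‖ < 1) (n : ℕ) :
    ((lam • (1 : H →L[ℂ] H) + T) ^ n) (kvec e w) = (lam + w) ^ n • kvec e w := by
  induction n with
  | zero => simp
  | succ n ih =>
    rw [pow_succ, ContinuousLinearMap.mul_apply, apply_kvec e T hT lam hw, map_smul, ih,
      smul_smul, pow_succ]
    ring_nf

end Stmt9Aux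

namespace Stmt9Aux
open FormalMultilinearSeries

variable {H : Type*} [NormedAddCommGroup H] [InnerProductSpace ℂ H] [CompleteSpace H]

local notation "⟪" x ", " y "⟫" => @inner ℂ _ _ x y

theorem dense_span_kvec (e : HilbertBasis ℕ ℂ H) (Ω : Set ℂ) (hΩo : IsOpen Ω)
    (hne : Ω.Nonempty) (hsub : Ω ⊆ Metric.ball 0 1) :
    Dense ((Submodule.span ℂ (kvec e '' Ω) : Submodule ℂ H) : Set H) := by
  rw [Submodule.dense_iff_topologicalClosure_eq_top,
    Submodule.topologicalClosure_eq_top_iff, Submodule.eq_bot_iff]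
  intro x hx
  set c : ℕ → ℂ := fun n => starRingEnd ℂ (e.repr x n) with hc
  set p := ofScalars ℂ c with hp
  have hbound : ∀ n, ‖c n‖ ≤ ‖x‖ := by
    intro n
    rw [hc]
    calc ‖starRingEnd ℂ (e.repr x n)‖ = ‖e.repr x n‖ := RCLike.norm_conj _
    _ ≤ ‖e.repr x‖ := lp.norm_apply_le_norm two_ne_zero (e.repr x) n
    _ = ‖x‖ := e.repr.norm_map x
  have hrad : 1 ≤ p.radius := by
    apply ENNReal.le_of_forall_nnreal_lt
    intro r hr
    rw [ENNReal.coe_lt_one_iff] at hr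
    apply p.le_radius_of_bound ‖x‖
    intro n
    calc ‖p n‖ * (r : ℝ) ^ n = ‖c n‖ * (r : ℝ) ^ n := by rw [hp, ofScalars_norm]
    _ ≤ ‖x‖ * 1 := by
        apply mul_le_mul (hbound n) (pow_le_one₀ r.coe_nonneg hr.le) (by positivity)
          (norm_nonneg x)
    _ = ‖x‖ := mul_one _
  have hfs : HasFPowerSeriesOnBall p.sum p 0 1 :=
    (p.hasFPowerSeriesOnBall (lt_of_lt_of_le zero_lt_one hrad)).mono zero_lt_one hrad
  have hsum0 : ∀ w : ℂ, ‖w‖ < 1 → p.sum w = ⟪x, kvec e w⟫ := by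
    intro w hw
    have h := e.hasSum_inner_mul_inner x (kvec e w)
    have heq : (fun i => ⟪x, e i⟫ * ⟪e i, kvec e w⟫) = fun i => c i * w ^ i := by
      funext i
      show ⟪x, e i⟫ * ⟪e i, kvec e w⟫ = starRingEnd ℂ (e.repr x i) * w ^ i
      rw [← HilbertBasis.repr_apply_apply e (kvec e w) i, repr_kvec e hw,
        ← inner_conj_symm x (e i), ← HilbertBasis.repr_apply_apply e x i]
    rw [heq] at h
    rw [← h.tsum_eq]
    apply tsum_congr
    intro n
    rw [hp]
    exact ofScalars_apply_eq c w n
  have horth : ∀ w ∈ Ω, p.sum w = 0 := by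
    intro w hw
    have h1 : kvec e w ∈ Submodule.span ℂ (kvec e '' Ω) :=
      Submodule.subset_span (Set.mem_image_of_mem _ hw)
    have h2 : ⟪kvec e w, x⟫ = 0 := (Submodule.mem_orthogonal _ x).mp hx _ h1
    have hw1 : ‖w‖ < 1 := by simpa [Metric.mem_ball, dist_zero_right] using hsub hw
    rw [hsum0 w hw1, ← inner_conj_symm, h2, map_zero]
  obtain ⟨w₀, hw₀⟩ := hne
  have hball_eq : Metric.eball (0 : ℂ) 1 = Metric.ball (0 : ℂ) 1 := by
    simpa using Metric.emetric_ball_nnreal (x := (0 : ℂ)) (ε := 1)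
  have hA : AnalyticOnNhd ℂ p.sum (Metric.ball (0 : ℂ) 1) := hball_eq ▸ hfs.analyticOnNhd
  have hEq : Set.EqOn p.sum 0 (Metric.ball (0 : ℂ) 1) := by
    apply hA.eqOn_zero_of_preconnected_of_eventuallyEq_zero
      (convex_ball (0 : ℂ) 1).isPreconnected (hsub hw₀)
    filter_upwards [hΩo.mem_nhds hw₀] with w hw
    exact horth w hw
  have h0 : HasFPowerSeriesAt 0 p 0 := by
    apply hfs.hasFPowerSeriesAt.congr
    filter_upwards [Metric.ball_mem_nhds (0 : ℂ) zero_lt_one] with w hw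
    exact hEq hw
  have hp0 : p = 0 := h0.eq_zero
  have hc0 : c = 0 := (ofScalars_series_eq_zero ℂ).mp (hp ▸ hp0)
  apply ext_repr e (y := 0)
  intro n
  have := congrFun hc0 n
  simp only [hc, Pi.zero_apply, map_eq_zero] at this
  simp [this]

end Stmt9Aux

namespace Stmt9Aux

variable {H : Type*} [NormedAddCommGroup H] [InnerProductSpace ℂ H] [CompleteSpace H]

theorem separable (e : HilbertBasis ℕ ℂ H) : TopologicalSpace.SeparableSpace H := by
  rw [← TopologicalSpace.isSeparable_univ_iff]
  have h1 : TopologicalSpace.IsSeparable (Set.range (e : ℕ → H)) :=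
    (Set.countable_range _).isSeparable
  have h3 := (h1.span (R := ℂ)).closure
  have h4 : Dense (Submodule.span ℂ (Set.range (e : ℕ → H)) : Set H) :=
    Submodule.dense_iff_topologicalClosure_eq_top.mpr e.dense_span
  rw [← h4.closure_eq]
  exact h3

theorem exists_dense_orbit (A : H →L[ℂ] H) (hsep : TopologicalSpace.SeparableSpace H)
    (htrans : ∀ U V : Set H, IsOpen U → IsOpen V → U.Nonempty → V.Nonempty →
      ∃ (n : ℕ) (x : H), x ∈ U ∧ (A ^ n) x ∈ V) :
    ∃ x : H, Dense (Set.range fun n : ℕ => (A ^ n) x) := by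
  obtain ⟨u, hu⟩ := TopologicalSpace.exists_dense_seq H
  set G : ℕ × ℕ → Set H :=
    fun km => ⋃ n : ℕ, (A ^ n) ⁻¹' Metric.ball (u km.1) (1 / (km.2 + 1)) with hG
  have hGo : ∀ km, IsOpen (G km) := fun km =>
    isOpen_iUnion fun n => Metric.isOpen_ball.preimage (A ^ n).continuous
  have hGd : ∀ km, Dense (G km) := by
    intro km
    rw [dense_iff_inter_open]
    intro U hU hUne
    have hb : (Metric.ball (u km.1) (1 / (km.2 + 1))).Nonempty :=
      Metric.nonempty_ball.mpr (by positivity)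
    obtain ⟨n, x, hxU, hxV⟩ := htrans U _ hU Metric.isOpen_ball hUne hb
    exact ⟨x, hxU, Set.mem_iUnion.mpr ⟨n, hxV⟩⟩
  have hd : Dense (⋂ km, G km) := dense_iInter_of_isOpen hGo hGd
  obtain ⟨x, hx⟩ := hd.nonempty
  refine ⟨x, Metric.dense_iff.mpr ?_⟩
  intro y r hr
  obtain ⟨k, hk⟩ := Metric.denseRange_iff.mp hu y (r / 2) (by positivity)
  obtain ⟨m, hm⟩ := exists_nat_one_div_lt (show (0 : ℝ) < r / 2 by positivity)
  have hxG := Set.mem_iInter.mp hx (k, m)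
  obtain ⟨n, hn⟩ := Set.mem_iUnion.mp hxG
  refine ⟨(A ^ n) x, Metric.mem_ball.mpr ?_, Set.mem_range_self n⟩
  have h1 : dist ((A ^ n) x) (u k) < 1 / (m + 1) := hn
  calc dist ((A ^ n) x) y ≤ dist ((A ^ n) x) (u k) + dist (u k) y := dist_triangle _ _ _
  _ < 1 / (m + 1) + r / 2 := by
      have : dist (u k) y = dist y (u k) := dist_comm _ _
      rw [this]; exact add_lt_add h1 hk
  _ < r / 2 + r / 2 := by linarith
  _ = r := by ring

end Stmt9Aux

namespace Stmt9Aux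

variable {H : Type*} [NormedAddCommGroup H] [InnerProductSpace ℂ H] [CompleteSpace H]
variable (e : HilbertBasis ℕ ℂ H) (T : H →L[ℂ] H)
  (hT : ∀ (x : H) (n : ℕ), e.repr (T x) n = e.repr x (n + 1)) (lam : ℂ)

include hT

theorem tendsto_zero_of_mem_span (Ω : Set ℂ)
    (hΩ : ∀ w ∈ Ω, ‖w‖ < 1 ∧ ‖lam + w‖ < 1) {y : H}
    (hy : y ∈ Submodule.span ℂ (kvec e '' Ω)) :
    Filter.Tendsto (fun n : ℕ => ((lam • (1 : H →L[ℂ] H) + T) ^ n) y) atTop (nhds 0) := by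
  induction hy using Submodule.span_induction with
  | mem z hz =>
    obtain ⟨w, hwΩ, rfl⟩ := hz
    obtain ⟨hw1, hw2⟩ := hΩ w hwΩ
    have h2 : Filter.Tendsto (fun n : ℕ => (lam + w) ^ n • kvec e w) atTop (nhds 0) := by
      simpa using (tendsto_pow_atTop_nhds_zero_of_norm_lt_one hw2).smul_const (kvec e w)
    exact h2.congr fun n => (pow_apply_kvec e T hT lam hw1 n).symm
  | zero => simp only [map_zero]; exact tendsto_const_nhds
  | add x y hx hy ihx ihy => simpa [map_add] using ihx.add ihy
  | smul a x hx ih => simpa [map_smul] using ih.const_smul a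

theorem exists_preimage_of_mem_span (Ω : Set ℂ)
    (hΩ : ∀ w ∈ Ω, ‖w‖ < 1 ∧ 1 < ‖lam + w‖) {y : H}
    (hy : y ∈ Submodule.span ℂ (kvec e '' Ω)) :
    ∃ s : ℕ → H, Filter.Tendsto s atTop (nhds 0) ∧
      ∀ n, ((lam • (1 : H →L[ℂ] H) + T) ^ n) (s n) = y := by
  induction hy using Submodule.span_induction with
  | mem z hz =>
    obtain ⟨w, hwΩ, rfl⟩ := hz
    obtain ⟨hw1, hw2⟩ := hΩ w hwΩ
    have hμ0 : lam + w ≠ 0 := by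
      intro h; rw [h] at hw2; simp at hw2; linarith
    refine ⟨fun n => ((lam + w)⁻¹) ^ n • kvec e w, ?_, ?_⟩
    · have hinv : ‖(lam + w)⁻¹‖ < 1 := by
        rw [norm_inv]
        exact inv_lt_one_of_one_lt₀ hw2
      simpa using (tendsto_pow_atTop_nhds_zero_of_norm_lt_one hinv).smul_const (kvec e w)
    · intro n
      rw [map_smul, pow_apply_kvec e T hT lam hw1, smul_smul, ← mul_pow,
        inv_mul_cancel₀ hμ0, one_pow, one_smul]
  | zero => exact ⟨fun _ => 0, tendsto_const_nhds, fun n => map_zero _⟩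
  | add x y hx hy ihx ihy =>
    obtain ⟨s, hs0, hsA⟩ := ihx
    obtain ⟨t, ht0, htA⟩ := ihy
    exact ⟨fun n => s n + t n, by simpa using hs0.add ht0,
      fun n => by rw [map_add, hsA n, htA n]⟩
  | smul a x hx ih =>
    obtain ⟨s, hs0, hsA⟩ := ih
    exact ⟨fun n => a • s n, by simpa using hs0.const_smul a,
      fun n => by rw [map_smul, hsA n]⟩

theorem transitive (hlam0 : lam ≠ 0) (hlam2 : ‖lam‖ < 2) :
    ∀ U V : Set H, IsOpen U → IsOpen V → U.Nonempty → V.Nonempty →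
      ∃ (n : ℕ) (x : H), x ∈ U ∧ ((lam • (1 : H →L[ℂ] H) + T) ^ n) x ∈ V := by
  intro U V hUo hVo hUne hVne
  have ha : 0 < ‖lam‖ := norm_pos_iff.mpr hlam0
  set Ω₁ : Set ℂ := {w : ℂ | ‖w‖ < 1 ∧ ‖lam + w‖ < 1} with hΩ₁
  set Ω₂ : Set ℂ := {w : ℂ | ‖w‖ < 1 ∧ 1 < ‖lam + w‖} with hΩ₂
  have hopen1 : IsOpen Ω₁ := by
    apply IsOpen.inter (isOpen_lt continuous_norm continuous_const)
      (isOpen_lt ((continuous_const.add continuous_id).norm) continuous_const)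
  have hopen2 : IsOpen Ω₂ := by
    apply IsOpen.inter (isOpen_lt continuous_norm continuous_const)
      (isOpen_lt continuous_const ((continuous_const.add continuous_id).norm))
  have hne1 : Ω₁.Nonempty := by
    refine ⟨-(lam / 2), ?_, ?_⟩
    · show ‖-(lam / 2)‖ < 1
      rw [norm_neg, norm_div]
      simp only [Complex.norm_ofNat]
      linarith
    · show ‖lam + -(lam / 2)‖ < 1
      have : lam + -(lam / 2) = lam / 2 := by ring
      rw [this, norm_div]
      simp only [Complex.norm_ofNat]
      linarith
  have hne2 : Ω₂.Nonempty := by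
    have hc : (0:ℝ) < 1 - ‖lam‖ / 2 := by linarith
    have hdiv : (0:ℝ) < (1 - ‖lam‖ / 2) / ‖lam‖ := div_pos hc ha
    refine ⟨((1 - ‖lam‖ / 2) / ‖lam‖ : ℝ) • lam, ?_, ?_⟩
    · show ‖((1 - ‖lam‖ / 2) / ‖lam‖ : ℝ) • lam‖ < 1
      rw [norm_smul, Real.norm_eq_abs, abs_of_pos hdiv]
      rw [div_mul_cancel₀ _ (ne_of_gt ha)]
      linarith
    · show 1 < ‖lam + ((1 - ‖lam‖ / 2) / ‖lam‖ : ℝ) • lam‖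
      have h1 : lam + ((1 - ‖lam‖ / 2) / ‖lam‖ : ℝ) • lam
          = ((1 + (1 - ‖lam‖ / 2) / ‖lam‖ : ℝ)) • lam := by
        rw [add_smul, one_smul]
      rw [h1, norm_smul, Real.norm_eq_abs, abs_of_pos (by linarith)]
      rw [add_mul, one_mul, div_mul_cancel₀ _ (ne_of_gt ha)]
      linarith
  have hsub1 : Ω₁ ⊆ Metric.ball 0 1 := fun w hw => Metric.mem_ball.mpr (by
    rw [dist_zero_right]; exact hw.1)
  have hsub2 : Ω₂ ⊆ Metric.ball 0 1 := fun w hw => Metric.mem_ball.mpr (by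
    rw [dist_zero_right]; exact hw.1)
  have hd1 := dense_span_kvec e Ω₁ hopen1 hne1 hsub1
  have hd2 := dense_span_kvec e Ω₂ hopen2 hne2 hsub2
  obtain ⟨u, huU, huS⟩ := hd1.inter_open_nonempty U hUo hUne
  obtain ⟨v, hvV, hvS⟩ := hd2.inter_open_nonempty V hVo hVne
  have hPu := tendsto_zero_of_mem_span e T hT lam Ω₁ (fun w hw => hw) huS
  obtain ⟨s, hs0, hsA⟩ := exists_preimage_of_mem_span e T hT lam Ω₂ (fun w hw => hw) hvS
  have hzu : Filter.Tendsto (fun n => u + s n) atTop (nhds u) := by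
    simpa using tendsto_const_nhds.add hs0
  have hAz : Filter.Tendsto
      (fun n : ℕ => ((lam • (1 : H →L[ℂ] H) + T) ^ n) u + v) atTop (nhds v) := by
    simpa using hPu.add tendsto_const_nhds
  have e1 : ∀ᶠ n in atTop, u + s n ∈ U := hzu.eventually_mem (hUo.mem_nhds huU)
  have e2 : ∀ᶠ n : ℕ in atTop, ((lam • (1 : H →L[ℂ] H) + T) ^ n) u + v ∈ V :=
    hAz.eventually_mem (hVo.mem_nhds hvV)
  obtain ⟨n, h1, h2⟩ := (e1.and e2).exists
  exact ⟨n, u + s n, h1, by rw [map_add, hsA n]; exact h2⟩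

end Stmt9Aux

namespace Stmt9Aux

variable {H : Type*} [NormedAddCommGroup H] [InnerProductSpace ℂ H] [CompleteSpace H]
variable (e : HilbertBasis ℕ ℂ H) (T : H →L[ℂ] H)
  (hT : ∀ (x : H) (n : ℕ), e.repr (T x) n = e.repr x (n + 1))

include hT

theorem norm_T_le (x : H) : ‖T x‖ ≤ ‖x‖ := by
  have hp : (0 : ℝ) < (2 : ℝ≥0∞).toReal := by norm_num
  rw [← e.repr.norm_map (T x), ← e.repr.norm_map x,
    ← Real.rpow_le_rpow_iff (norm_nonneg _) (norm_nonneg _) hp,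
    lp.norm_rpow_eq_tsum hp, lp.norm_rpow_eq_tsum hp]
  exact Summable.tsum_le_tsum_of_inj (fun n => n + 1) (fun a b h => by simpa using h)
    (fun c _ => by positivity) (fun n => by rw [hT x n])
    (Memℓp.summable hp (lp.memℓp _)) (Memℓp.summable hp (lp.memℓp _))

theorem norm_le_apply_of_two_le {lam : ℂ} (hlam : 2 ≤ ‖lam‖) (y : H) :
    ‖y‖ ≤ ‖(lam • (1 : H →L[ℂ] H) + T) y‖ := by
  have h1 : (lam • (1 : H →L[ℂ] H) + T) y = lam • y + T y := by simp
  have h2 : ‖lam • y‖ - ‖-(T y)‖ ≤ ‖lam • y - -(T y)‖ := norm_sub_norm_le _ _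
  rw [sub_neg_eq_add, norm_neg, norm_smul] at h2
  have h3 : ‖T y‖ ≤ ‖y‖ := norm_T_le e T hT y
  have h4 : 2 * ‖y‖ ≤ ‖lam‖ * ‖y‖ := mul_le_mul_of_nonneg_right hlam (norm_nonneg y)
  rw [h1]
  linarith

theorem norm_le_pow_apply_of_two_le {lam : ℂ} (hlam : 2 ≤ ‖lam‖) (x : H) (n : ℕ) :
    ‖x‖ ≤ ‖((lam • (1 : H →L[ℂ] H) + T) ^ n) x‖ := by
  induction n with
  | zero => simp
  | succ n ih =>
    rw [pow_succ', ContinuousLinearMap.mul_apply]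
    exact le_trans ih (by
      simpa using norm_le_apply_of_two_le e T hT hlam (((lam • (1 : H →L[ℂ] H) + T) ^ n) x))

end Stmt9Aux

open Stmt9Aux in
/-- Let `T` be the backward shift on `ℓ²(ℕ)` (characterised here via a
Hilbert basis `e` by `(T x)ₙ = xₙ₊₁`).  Then `λI + T` is unitarily equivalent to the
adjoint `M_φ*` of the multiplication operator by `φ(z) = λ̄ + z` on the Hardy space, and
the set of `λ` for which `λI + T` is hypercyclic is `S_H(T) = 2𝔻 \ {0}`, i.e.
`λI + T` is hypercyclic if and only if `λ ≠ 0` and `|λ| < 2`. -/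
theorem stmt_9 {H : Type*} [NormedAddCommGroup H] [InnerProductSpace ℂ H]
    [CompleteSpace H]
    (e : HilbertBasis ℕ ℂ H) (T : H →L[ℂ] H)
    (hT : ∀ (x : H) (n : ℕ), e.repr (T x) n = e.repr x (n + 1)) :
    ∀ lam : ℂ,
      (∃ x : H, Dense (Set.range fun n : ℕ => ((lam • (1 : H →L[ℂ] H) + T) ^ n) x)) ↔
        (lam ≠ 0 ∧ ‖lam‖ < 2) := by
  intro lam
  have he0 : ‖e 0‖ = 1 := e.orthonormal.1 0
  constructor
  · rintro ⟨x, hx⟩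
    constructor
    · rintro rfl
      have hA : (0 : ℂ) • (1 : H →L[ℂ] H) + T = T := by simp
      rw [hA] at hx
      have hb : ∀ n, ‖(T ^ n) x‖ ≤ ‖x‖ := by
        intro n
        induction n with
        | zero => simp
        | succ n ih =>
          rw [pow_succ', ContinuousLinearMap.mul_apply]
          exact le_trans (norm_T_le e T hT _) ih
      obtain ⟨z, ⟨n, rfl⟩, hdist⟩ := hx.exists_dist_lt ((‖x‖ + 2) • e 0) zero_lt_one
      have hy : ‖(‖x‖ + 2 : ℝ) • e 0‖ = ‖x‖ + 2 := by
        rw [norm_smul, Real.norm_eq_abs, abs_of_pos (by positivity), he0, mul_one]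
      have h2 : ‖(‖x‖ + 2 : ℝ) • e 0‖ ≤ dist ((‖x‖ + 2 : ℝ) • e 0) ((T ^ n) x)
          + ‖(T ^ n) x‖ := by
        rw [dist_eq_norm]
        have := norm_add_le ((‖x‖ + 2 : ℝ) • e 0 - (T ^ n) x) ((T ^ n) x)
        simpa using this
      rw [hy] at h2
      have hdist' : dist ((‖x‖ + 2 : ℝ) • e 0) ((T ^ n) x) < 1 := hdist
      have := hb n
      linarith
    · by_contra hcon
      push_neg at hcon
      have hgrow := norm_le_pow_apply_of_two_le e T hT hcon
      rcases eq_or_ne x 0 with rfl | hx0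
      · obtain ⟨z, ⟨n, rfl⟩, hdist⟩ := hx.exists_dist_lt (e 0) one_half_pos
        have h0 : ((lam • (1 : H →L[ℂ] H) + T) ^ n) (0 : H) = 0 := map_zero _
        have hdist' : dist (e 0) (0 : H) < 1 / 2 := by simpa [h0] using hdist
        rw [dist_zero_right, he0] at hdist'
        linarith
      · have hxpos : 0 < ‖x‖ := norm_pos_iff.mpr hx0
        obtain ⟨z, ⟨n, rfl⟩, hdist⟩ := hx.exists_dist_lt 0 hxpos
        have hdist' : dist (0 : H) (((lam • (1 : H →L[ℂ] H) + T) ^ n) x) < ‖x‖ := hdist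
        rw [dist_zero_left] at hdist'
        exact absurd hdist' (not_lt.mpr (hgrow x n))
  · rintro ⟨hlam0, hlam2⟩
    exact exists_dense_orbit _ (separable e) (transitive e T hT lam hlam0 hlam2)
end
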